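/- Let Set carry the trivial model-category-like structure where weak equivalences are bijections and every map is a fibration. Then Set does not satisfy the isofibration axiom: there exists a functor f : A → B between small Set-enriched categories (i.e., ordinary small categories) that is the identity on objects (hence a simple fibration) but is not an isofibration. Concretely, let A have objects {0,1} and no non-identity maps, and B have objects {0,1} with exactly one isomorphism v : 0 → 1 and its inverse; the identity-on-objects functor A → B is not an isofibration since v cannot be lifted. -/
import Mathlib

open CategoryTheory

universe v₁ v₂ u₁ u₂

/-- A functor `F : A ⥤ B` is an isofibration if for every object `a` of `A` and every
isomorphism `f : F a ≅ b` in `B` there is an isomorphism `g : a ≅ a'` in `A` with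
`F a' = b` and `F g = f`. -/
def IsIsofibration {A : Type u₁} {B : Type u₂} [Category.{v₁} A] [Category.{v₂} B]
    (F : A ⥤ B) : Prop :=
  ∀ (a : A) (b : B) (f : F.obj a ≅ b),
    ∃ (a' : A) (g : a ≅ a') (h : F.obj a' = b),
      F.map g.hom = f.hom ≫ eqToHom h.symm

/-- The category `B` with objects `{0,1}` and exactly one isomorphism `v : 0 → 1`
(and its inverse); i.e. the indiscrete category on two objects. -/
def TwoIso : Type := Bool

instance : Category TwoIso where
  Hom _ _ := PUnit
  id _ := PUnit.unit
  comp _ _ := PUnit.unit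

/-- The identity-on-objects functor from the discrete category `A` on `{0,1}`
(no non-identity maps) to `TwoIso`.  For the trivial model-like structure on `Set`
(weak equivalences the bijections, every map a fibration), this is a simple fibration
in `Cat`. -/
def simpleFib : Discrete Bool ⥤ TwoIso where
  obj x := x.as
  map _ := PUnit.unit

/-- `Set` with the trivial structure does not satisfy the isofibration axiom:
the identity-on-objects functor `simpleFib : A ⟶ B` (a simple fibration) is not an
isofibration, since the isomorphism `v : 0 ≅ 1` of `B` cannot be lifted. -/
theorem stmt5 :
    (∀ x : Bool, simpleFib.obj ⟨x⟩ = (x : TwoIso)) ∧ ¬ IsIsofibration simpleFib := by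
  refine ⟨fun x => rfl, fun h => ?_⟩
  obtain ⟨a', g, hb, -⟩ := h ⟨false⟩ (true : Bool)
    ⟨PUnit.unit, PUnit.unit, rfl, rfl⟩
  have : a'.as = false := (Discrete.eq_of_hom g.hom).symm
  have : (false : Bool) = true := this ▸ hb
  simp at this
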